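/- Let φ : [0,∞) → [0,∞) be a quasi-concave function, and let φ̃ be its least concave majorant. Then (1/2)·φ̃(t) ≤ φ(t) ≤ φ̃(t) for all t ≥ 0; in particular (1/2)φ̃ ≤ φ ≤ 2φ̃. -/

import Mathlib

/-!
Below a point `t > 0`, monotonicity gives `φ s ≤ φ t`; above it, the decrease of `φ s / s` gives
`φ s ≤ (φ t / t) * s`. Hence the affine, so concave, function `s ↦ φ t + (φ t / t) * s` majorizes
`φ`, and evaluating it at `t` yields `φ̃ t ≤ 2 φ t`. At `t = 0` the least concave majorant vanishes,
because lowering a nonnegative concave function to `0` at the endpoint `0` keeps it concave.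
-/

open scoped NNReal

lemma concaveOn_update_zero {f : ℝ≥0 → ℝ≥0} (hf : ConcaveOn ℝ≥0 Set.univ f) :
    ConcaveOn ℝ≥0 Set.univ (Function.update f 0 0) := by
  set g := Function.update f 0 0
  have hgf : ∀ x, g x ≤ f x := fun x => by
    by_cases hx : x = 0 <;> simp [g, hx]
  have hmul : ∀ a x : ℝ≥0, a * x = 0 → a * g x = 0 := fun a x h => by
    rcases mul_eq_zero.mp h with rfl | rfl <;> simp [g]
  refine ⟨convex_univ, fun x _ y _ a b _ _ hab => ?_⟩
  simp only [smul_eq_mul]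
  by_cases hxy : a * x + b * y = 0
  · obtain ⟨hax, hby⟩ := add_eq_zero.mp hxy
    simp [hxy, hmul a x hax, hmul b y hby, g]
  · calc a * g x + b * g y ≤ a * f x + b * f y := by gcongr <;> exact hgf _
      _ ≤ f (a * x + b * y) := hf.2 trivial trivial zero_le zero_le hab
      _ = g (a * x + b * y) := by simp [g, hxy]

lemma concaveOn_const_add_mul (a c : ℝ≥0) :
    ConcaveOn ℝ≥0 Set.univ (fun s : ℝ≥0 => a + c * s) := by
  refine ⟨convex_univ, fun x _ y _ p q _ _ hpq => le_of_eq ?_⟩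
  calc p • (a + c * x) + q • (a + c * y) = (p + q) * a + c * (p * x + q * y) := by
        simp only [smul_eq_mul]; ring
    _ = a + c * (p • x + q • y) := by rw [hpq, one_mul]; rfl

lemma le_add_div_mul_of_monotoneOn_of_antitoneOn {φ : ℝ≥0 → ℝ≥0} (h0 : φ 0 = 0)
    (hmono : MonotoneOn φ (Set.Ioi 0)) (hdec : AntitoneOn (fun t => φ t / t) (Set.Ioi 0))
    {t : ℝ≥0} (ht : 0 < t) (s : ℝ≥0) : φ s ≤ φ t + φ t / t * s := by
  rcases eq_zero_or_pos s with rfl | hs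
  · simp [h0]
  rcases le_or_gt s t with hst | hts
  · exact (hmono hs ht hst).trans le_self_add
  · calc φ s = φ s / s * s := (div_mul_cancel₀ _ hs.ne').symm
      _ ≤ φ t / t * s := by gcongr ?_ * _; exact hdec ht hs hts.le
      _ ≤ φ t + φ t / t * s := le_add_self

/-- If φ̃ is the least concave majorant of a quasi-concave function φ, then
(1/2)·φ̃(t) ≤ φ(t) ≤ φ̃(t); in particular (1/2)φ̃ ≤ φ ≤ 2φ̃. -/
theorem stmt5 (φ φt : ℝ≥0 → ℝ≥0)
    (h0 : ∀ t, φ t = 0 ↔ t = 0)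
    (hmono : MonotoneOn φ (Set.Ioi 0))
    (hdec : AntitoneOn (fun t => φ t / t) (Set.Ioi 0))
    (hconc : ConcaveOn ℝ≥0 Set.univ φt)
    (hmaj : ∀ t, φ t ≤ φt t)
    (hleast : ∀ g : ℝ≥0 → ℝ≥0, ConcaveOn ℝ≥0 Set.univ g → (∀ t, φ t ≤ g t) →
      ∀ t, φt t ≤ g t) :
    ∀ t : ℝ≥0, φt t / 2 ≤ φ t ∧ φ t ≤ φt t ∧ φ t ≤ 2 * φt t := by
  have hφ0 : φ 0 = 0 := (h0 0).mpr rfl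
  intro t
  refine ⟨?_, hmaj t, (hmaj t).trans (le_mul_of_one_le_left zero_le one_le_two)⟩
  rw [div_le_iff₀ two_pos, mul_comm]
  rcases eq_zero_or_pos t with rfl | ht
  · have hmaj₀ : ∀ s, φ s ≤ Function.update φt 0 0 s := fun s => by
      rcases eq_or_ne s 0 with rfl | hs
      · simp [hφ0]
      · simpa [hs] using hmaj s
    simpa [hφ0] using hleast _ (concaveOn_update_zero hconc) hmaj₀ 0
  · calc φt t ≤ φ t + φ t / t * t := hleast _ (concaveOn_const_add_mul _ _)
          (le_add_div_mul_of_monotoneOn_of_antitoneOn hφ0 hmono hdec ht) t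
      _ = 2 * φ t := by rw [div_mul_cancel₀ _ ht.ne', two_mul]
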